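/- Let char F ≠ 2 and let (b,u) be a pair with b a non-degenerate symmetric bilinear form on a finite-dimensional vector space V and u a b-selfadjoint nilpotent endomorphism all of whose Jordan cells have the same even size k = 2l. Then Ker(u^i) = Im(u^{k−i}) for all 0 ≤ i ≤ k, in particular Ker(u^l) = Im(u^l) = (Ker u^l)^⊥, and consequently b is hyperbolic. -/

import Mathlib

open Module

private def auxFinEquiv (m j : ℕ) : Fin (m - j) ≃ {t : Fin m // j ≤ (t : ℕ)} where
  toFun t := ⟨⟨j + t, by have := t.isLt; omega⟩, by simp⟩
  invFun t := ⟨(t : ℕ) - j, by have := t.2; have := t.1.isLt; omega⟩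
  left_inv t := by ext; simp
  right_inv t := by have := t.2; ext; simp; omega

private lemma card_aux (ι : Type*) [Fintype ι] (m j : ℕ) :
    Fintype.card {p : ι × Fin m // j ≤ (p.2 : ℕ)} = Fintype.card ι * (m - j) := by
  have e1 : {p : ι × Fin m // j ≤ (p.2 : ℕ)} ≃ ι × {t : Fin m // j ≤ (t : ℕ)} :=
    { toFun := fun p => (p.1.1, ⟨p.1.2, p.2⟩)
      invFun := fun q => ⟨(q.1, q.2.1), q.2.2⟩
      left_inv := fun p => rfl
      right_inv := fun q => rfl }
  rw [Fintype.card_congr e1, Fintype.card_prod,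
    Fintype.card_congr (auxFinEquiv m j).symm, Fintype.card_fin]

/-- If `u` is a `b`-selfadjoint nilpotent endomorphism all of whose Jordan cells have
the same even size `2l` (with `b` non-degenerate symmetric, `char F ≠ 2`), then
`Ker(u^i) = Im(u^{2l−i})` for `0 ≤ i ≤ 2l`, in particular `Ker(u^l)` is its own
`b`-orthogonal, and `b` is hyperbolic. -/
theorem even_jordan_cells_implies_hyperbolic
    {F V : Type*} [Field F] [AddCommGroup V] [Module F V] [FiniteDimensional F V]
    (hchar : (2 : F) ≠ 0)
    (b : LinearMap.BilinForm F V) (hb : b.Nondegenerate)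
    (hbs : ∀ x y, b x y = b y x)
    (u : Module.End F V) (hu : ∀ x y, b (u x) y = b x (u y))
    (l : ℕ) (hl : 1 ≤ l)
    (ι : Type*) [Fintype ι] (v : ι → V)
    (hnil : u ^ (2 * l) = 0)
    (e : Basis (ι × Fin (2 * l)) F V)
    (he : ∀ p : ι × Fin (2 * l), e p = (u ^ (p.2 : ℕ)) (v p.1)) :
    (∀ i ≤ 2 * l, LinearMap.ker (u ^ i) = LinearMap.range (u ^ (2 * l - i))) ∧
    (∀ x : V, x ∈ LinearMap.ker (u ^ l) ↔ ∀ y ∈ LinearMap.ker (u ^ l), b x y = 0) ∧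
    (∃ L : Submodule F V, (∀ x ∈ L, ∀ y ∈ L, b x y = 0) ∧
      2 * Module.finrank F L = Module.finrank F V) := by
  classical
  have hpow : ∀ (n : ℕ) (x y : V), b ((u ^ n) x) y = b x ((u ^ n) y) := by
    intro n
    induction n with
    | zero => intro x y; simp
    | succ n ih =>
      intro x y
      rw [pow_succ, Module.End.mul_apply, ih, hu, ← Module.End.mul_apply, ← pow_succ',
        pow_succ]
  have hzero : ∀ a, 2 * l ≤ a → (u ^ a) = 0 := by
    intro a ha
    have h : u ^ a = u ^ (a - 2 * l) * u ^ (2 * l) := by rw [← pow_add]; congr 1; omega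
    rw [h, hnil, mul_zero]
  have hrange : ∀ j, LinearMap.range (u ^ j) =
      Submodule.span F (e '' {p : ι × Fin (2 * l) | j ≤ (p.2 : ℕ)}) := by
    intro j
    rw [LinearMap.range_eq_map, ← e.span_eq, Submodule.map_span]
    apply le_antisymm
    · rw [Submodule.span_le]
      rintro _ ⟨_, ⟨p, rfl⟩, rfl⟩
      by_cases hc : (p.2 : ℕ) + j < 2 * l
      · have h : (u ^ j) (e p) = e (p.1, ⟨(p.2 : ℕ) + j, hc⟩) := by
          rw [he, he, ← Module.End.mul_apply, ← pow_add]
          congr 2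
          simp; omega
        rw [h]
        exact Submodule.subset_span ⟨_, by simp, rfl⟩
      · have h : (u ^ j) (e p) = 0 := by
          rw [he, ← Module.End.mul_apply, ← pow_add, hzero _ (by omega)]
          rfl
        rw [h]; exact Submodule.zero_mem _
    · rw [Submodule.span_le]
      rintro _ ⟨p, hp, rfl⟩
      have hp' : j ≤ (p.2 : ℕ) := hp
      have h : e p = (u ^ j) (e (p.1, ⟨(p.2 : ℕ) - j, by have := p.2.isLt; omega⟩)) := by
        rw [he, he, ← Module.End.mul_apply, ← pow_add]
        congr 2
        simp; omega
      rw [h]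
      exact Submodule.subset_span ⟨_, ⟨_, rfl⟩, rfl⟩
  have hfinrank : ∀ j, finrank F (LinearMap.range (u ^ j)) =
      Fintype.card ι * (2 * l - j) := by
    intro j
    have hli : LinearIndependent F
        (fun x : ↥{p : ι × Fin (2 * l) | j ≤ (p.2 : ℕ)} => e ↑x) :=
      e.linearIndependent.comp _ Subtype.val_injective
    rw [hrange j, Set.image_eq_range, finrank_span_eq_card hli]
    exact card_aux ι (2 * l) j
  have hV : finrank F V = Fintype.card ι * (2 * l) := by
    rw [finrank_eq_card_basis e, Fintype.card_prod, Fintype.card_fin]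
  have claim1 : ∀ i ≤ 2 * l,
      LinearMap.ker (u ^ i) = LinearMap.range (u ^ (2 * l - i)) := by
    intro i hi
    have hle : LinearMap.range (u ^ (2 * l - i)) ≤ LinearMap.ker (u ^ i) := by
      rintro x ⟨y, rfl⟩
      simp only [LinearMap.mem_ker, ← Module.End.mul_apply, ← pow_add]
      rw [show i + (2 * l - i) = 2 * l by omega, hnil]
      rfl
    have h2 := LinearMap.finrank_range_add_finrank_ker (u ^ i)
    rw [hfinrank i, hV] at h2
    have e2 : Fintype.card ι * (2 * l - i) + Fintype.card ι * i
        = Fintype.card ι * (2 * l) := by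
      rw [← Nat.mul_add, Nat.sub_add_cancel hi]
    have h3 : finrank F (LinearMap.ker (u ^ i)) = Fintype.card ι * i :=
      Nat.add_left_cancel (h2.trans e2.symm)
    refine (Submodule.eq_of_le_of_finrank_le hle ?_).symm
    rw [h3, hfinrank (2 * l - i), show 2 * l - (2 * l - i) = i by omega]
  have hkr : LinearMap.ker (u ^ l) = LinearMap.range (u ^ l) := by
    have h := claim1 l (by omega)
    rwa [show 2 * l - l = l by omega] at h
  have claim2 : ∀ x : V, x ∈ LinearMap.ker (u ^ l) ↔
      ∀ y ∈ LinearMap.ker (u ^ l), b x y = 0 := by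
    intro x
    constructor
    · intro hx y hy
      rw [hkr] at hx
      obtain ⟨z, rfl⟩ := hx
      rw [hpow, LinearMap.mem_ker.mp hy]
      simp
    · intro h
      rw [LinearMap.mem_ker]
      refine hb.1 _ fun z => ?_
      rw [hpow]
      refine h _ ?_
      rw [LinearMap.mem_ker, ← Module.End.mul_apply, ← pow_add,
        hzero (l + l) (by omega)]
      rfl
  refine ⟨claim1, claim2, LinearMap.ker (u ^ l),
    fun x hx y hy => (claim2 x).mp hx y hy, ?_⟩
  have h2 := LinearMap.finrank_range_add_finrank_ker (u ^ l)
  rw [← hkr] at h2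
  omega
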